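/- In the complete binary tree convergecast with concurrency 2 at the root, total latency satisfies latency_H = n·M·2·t_s (the root receives 2 packets per 4·t_s period), whereas the one-line scheme has latency ≥ n·M·3·t_s when all but o(n) nodes are at distance ≥ 3; hence lim (latency_H / latency_line) ≤ 2/3. -/

import Mathlib

open Filter

/-- Harvest with concurrency 2 at the root collects `n·M` packets in time
`latency_H n = n·M·2·t_s` (2 packets per period `4·t_s`). If the number `f n` of nodes at
distance ≤ 2 is `o(n)` and the line scheme's latency satisfies
`latency_line n ≥ (n − f n)·M·3·t_s` (one packet per `3·t_s` from nodes at distance ≥ 3),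
then asymptotically `limsup (latency_H / latency_line) ≤ 2/3`. -/
theorem stmt_15 (M : ℕ) (hM : 0 < M) (ts : ℝ) (hts : 0 < ts)
    (f : ℕ → ℕ)
    (hf : Tendsto (fun n : ℕ => (f n : ℝ) / n) atTop (nhds 0))
    (latencyLine : ℕ → ℝ)
    (hL : ∀ n : ℕ, ((n : ℝ) - f n) * M * 3 * ts ≤ latencyLine n) :
    limsup (fun n : ℕ => ((n : ℝ) * M * 2 * ts) / latencyLine n) atTop ≤ 2 / 3 := by
  have hM' : (0:ℝ) < M := by exact_mod_cast hM
  have hev : ∀ᶠ n : ℕ in atTop, (f n : ℝ) / n < 1/2 :=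
    hf.eventually (gt_mem_nhds (by norm_num))
  set g : ℕ → ℝ := fun n => (2/3) * ((n:ℝ)/((n:ℝ) - f n)) with hg
  -- Tendsto g atTop (nhds (2/3))
  have h1 : Tendsto (fun n : ℕ => 1 - (f n : ℝ)/n) atTop (nhds 1) := by
    simpa using tendsto_const_nhds.sub hf
  have h2 : Tendsto (fun n : ℕ => (1 - (f n : ℝ)/n)⁻¹) atTop (nhds 1) := by
    simpa using h1.inv₀ one_ne_zero
  have heq : ∀ᶠ n : ℕ in atTop,
      (1 - (f n : ℝ)/n)⁻¹ = (n:ℝ)/((n:ℝ) - f n) := by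
    filter_upwards [eventually_ge_atTop 1] with n hn
    have hn' : (0:ℝ) < n := by exact_mod_cast hn
    rw [one_sub_div hn'.ne', inv_div]
  have hgt : Tendsto g atTop (nhds (2/3)) := by
    have := (h2.congr' heq).const_mul (2/3 : ℝ)
    simpa using this
  -- key eventual bound
  have hKey : ∀ᶠ n : ℕ in atTop,
      ((n : ℝ) * M * 2 * ts) / latencyLine n ≤ g n := by
    filter_upwards [hev, eventually_ge_atTop 1] with n hfn hn
    have hn' : (0:ℝ) < n := by exact_mod_cast hn
    have hfn' : (f n : ℝ) < n / 2 := by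
      have := (div_lt_iff₀ hn').mp hfn
      linarith
    have hpos : (0:ℝ) < (n:ℝ) - f n := by linarith
    have hLpos : (0:ℝ) < latencyLine n :=
      lt_of_lt_of_le (by positivity) (hL n)
    have h3 : ((n : ℝ) * M * 2 * ts) / latencyLine n
        ≤ ((n : ℝ) * M * 2 * ts) / (((n:ℝ) - f n) * M * 3 * ts) := by
      apply div_le_div_of_nonneg_left (by positivity) (by positivity) (hL n)
    refine h3.trans_eq ?_
    rw [hg]
    field_simp
  have hnonneg : ∀ᶠ n : ℕ in atTop,
      (0:ℝ) ≤ ((n : ℝ) * M * 2 * ts) / latencyLine n := by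
    filter_upwards [hev, eventually_ge_atTop 1] with n hfn hn
    have hn' : (0:ℝ) < n := by exact_mod_cast hn
    have hfn' : (f n : ℝ) < n / 2 := by
      have := (div_lt_iff₀ hn').mp hfn
      linarith
    have hpos : (0:ℝ) < (n:ℝ) - f n := by linarith
    have hLpos : (0:ℝ) < latencyLine n :=
      lt_of_lt_of_le (by positivity) (hL n)
    exact div_nonneg (by positivity) hLpos.le
  calc limsup (fun n : ℕ => ((n : ℝ) * M * 2 * ts) / latencyLine n) atTop
      ≤ limsup g atTop := by
        refine limsup_le_limsup hKey ?_ ?_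
        · exact IsCoboundedUnder.of_frequently_ge
            (hnonneg.frequently.mono (fun n h => h))
        · exact hgt.isBoundedUnder_le
    _ = 2/3 := hgt.limsup_eq
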